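/- Let Y be a non-negative random variable and r ∈ (1,∞), and suppose t ↦ (P{Y ≥ t})^{−1/r} is convex on [0,∞). Let X be a random variable such that E[max{X−a, 0}] ≤ E[max{Y−a, 0}] for all a > 0. Then for all t ≥ 0, P{X ≥ t} ≤ (1 − 1/r)^{−r}·P{Y ≥ t}. -/

import Mathlib

open MeasureTheory Set Real Filter Topology

/-!
Write `G t = P{Y ≥ t}` and `f = G ^ (-1/r)`. Markov's inequality bounds `(t - a) P{X ≥ t}`
by the stop-loss `E (X - a)⁺ ≤ E (Y - a)⁺ = ∫_a^∞ G`. Since `f` is convex it lies above its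
tangent line `ℓ` at `t`, of slope `m`, so `G ≤ ℓ ^ (-r)` beyond `a = t - f t / (m r)`, where the
area under `ℓ ^ (-r)` is explicit; this choice of `a` makes the resulting bound exactly
`(1 - 1/r) ^ (-r) G t`. The tangent exists as long as `G` does not vanish right after `t`;
otherwise `Y ≤ t` a.s. and the stop-loss comparison alone gives `P{X ≥ t} ≤ G t`.
-/

lemma ConvexOn.add_rightDeriv_mul_sub_le {S : Set ℝ} {f : ℝ → ℝ} (hf : ConvexOn ℝ S f)
    {x y : ℝ} (hx : x ∈ interior S) (hy : y ∈ S) :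
    f x + derivWithin f (Ioi x) x * (y - x) ≤ f y := by
  rcases lt_trichotomy y x with hyx | rfl | hxy
  · have hleft := hf.slope_le_leftDeriv_of_mem_interior hy hx hyx
    rw [slope_def_field, div_le_iff₀ (sub_pos.2 hyx)] at hleft
    nlinarith [hf.leftDeriv_le_rightDeriv_of_mem_interior hx]
  · simp
  · have hright := hf.rightDeriv_le_slope_of_mem_interior hx hy hxy
    rw [slope_def_field, le_div_iff₀ (sub_pos.2 hxy)] at hright
    linarith

lemma le_rpow_neg_of_le_rpow_neg_inv {x y r : ℝ} (hx : 0 ≤ x) (hy : 0 < y) (hr : 0 < r)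
    (h : y ≤ x ^ (-(1 / r))) : x ≤ y ^ (-r) := by
  rcases hx.eq_or_lt with rfl | hx
  · positivity
  · rw [show -(1 / r) = (-r)⁻¹ by rw [one_div, inv_neg]] at h
    exact (le_rpow_inv_iff_of_neg hy hx (neg_neg_of_pos hr)).1 h

lemma one_lt_rpow_neg_inv_mul {x r : ℝ} (hr : 1 < r) (hx : 0 < x) (h : x < (1 - 1 / r) ^ r) :
    1 < x ^ (-(1 / r)) * (1 - 1 / r) := by
  have hr0 : 0 < r := by linarith
  have h1r : 0 < 1 - 1 / r := sub_pos.2 ((div_lt_one hr0).2 hr)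
  have := rpow_lt_rpow_of_neg hx h (neg_neg_of_pos (one_div_pos.2 hr0))
  rwa [← rpow_mul h1r.le, show r * -(1 / r) = -1 by field_simp, rpow_neg_one,
    inv_lt_iff_one_lt_mul₀ h1r] at this

lemma lintegral_Ioi_rpow_neg_affine {c m r : ℝ} (hc : 0 < c) (hm : 0 < m) (hr : 1 < r) :
    ∫⁻ s in Ioi 0, ENNReal.ofReal ((c + m * s) ^ (-r))
      = ENNReal.ofReal (c ^ (1 - r) / (m * (r - 1))) := by
  have hpos : ∀ s ∈ Ici (0 : ℝ), 0 < c + m * s := fun s hs => by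
    have := mem_Ici.1 hs
    positivity
  have hr' : 1 - r ≠ 0 := by linarith
  set F : ℝ → ℝ := fun s => (c + m * s) ^ (1 - r) / (m * (1 - r)) with hF
  have hderiv : ∀ s ∈ Ici (0 : ℝ), HasDerivAt F ((c + m * s) ^ (-r)) s := by
    intro s hs
    have := ((((hasDerivAt_id s).const_mul m).const_add c).rpow_const (p := 1 - r)
      (Or.inl (hpos s hs).ne')).div_const (m * (1 - r))
    simp only [id] at this
    refine this.congr_deriv ?_
    rw [show 1 - r - 1 = -r by ring]
    field_simp
  have hnn : ∀ s ∈ Ioi (0 : ℝ), 0 ≤ (c + m * s) ^ (-r) := fun s hs =>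
    rpow_nonneg (hpos s (Ioi_subset_Ici_self hs)).le _
  have hlim : Tendsto F atTop (𝓝 0) := by
    have := (tendsto_rpow_neg_atTop (sub_pos.2 hr)).comp
      (tendsto_atTop_add_const_left _ c (tendsto_id.const_mul_atTop hm))
    simpa [hF, Function.comp_def] using this.div_const (m * (1 - r))
  rw [← ofReal_integral_eq_lintegral_ofReal (integrableOn_Ioi_deriv_of_nonneg' hderiv hnn hlim)
    ((ae_restrict_iff' measurableSet_Ioi).2 (ae_of_all _ hnn)),
    integral_Ioi_of_hasDerivAt_of_nonneg' hderiv hnn hlim]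
  simp only [hF, mul_zero, add_zero, zero_sub]
  rw [show m * (1 - r) = -(m * (r - 1)) by ring, div_neg, neg_neg]

section

variable {Ω : Type*} [MeasurableSpace Ω] (μ : Measure Ω) {X Y : Ω → ℝ}

/-- The stop-loss transform `a ↦ E (X - a)⁺`. -/
noncomputable def stopLoss (X : Ω → ℝ) (a : ℝ) : ENNReal :=
  ∫⁻ ω, ENNReal.ofReal (max (X ω - a) 0) ∂μ

lemma tendsto_measure_setOf_le_nhdsLT [IsFiniteMeasure μ] (hY : Measurable Y) (t : ℝ) :
    Tendsto (fun a => μ {ω | a ≤ Y ω}) (𝓝[<] t) (𝓝 (μ {ω | t ≤ Y ω})) := by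
  have h := tendsto_measure_biInter_gt (μ := μ) (ι := ℝᵒᵈ)
    (s := fun a => {ω | OrderDual.ofDual a ≤ Y ω}) (a := OrderDual.toDual t)
    (fun _ _ => (measurableSet_le measurable_const hY).nullMeasurableSet)
    (fun i j _ hij _ hω =>
      le_trans (show OrderDual.ofDual j ≤ OrderDual.ofDual i from hij) hω)
    ⟨OrderDual.toDual (t - 1), show t - 1 < t by linarith, measure_ne_top _ _⟩
  have hinter : ⋂ r > OrderDual.toDual t, {ω | OrderDual.ofDual r ≤ Y ω} = {ω | t ≤ Y ω} := by
    ext ω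
    simpa using forall_lt_imp_le_iff_le_of_dense
  rwa [hinter] at h

lemma ofReal_sub_mul_measure_le_stopLoss (hX : Measurable X) (a t : ℝ) :
    ENNReal.ofReal (t - a) * μ {ω | t ≤ X ω} ≤ stopLoss μ X a :=
  calc ENNReal.ofReal (t - a) * μ {ω | t ≤ X ω}
      ≤ ENNReal.ofReal (t - a) *
          μ {ω | ENNReal.ofReal (t - a) ≤ ENNReal.ofReal (max (X ω - a) 0)} := by
        gcongr with ω
        exact fun hω => ENNReal.ofReal_le_ofReal (le_max_of_le_left (by linarith))
    _ ≤ _ := mul_meas_ge_le_lintegral₀ (by fun_prop) _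

lemma stopLoss_eq_lintegral_measure_le (hY : Measurable Y) (a : ℝ) :
    stopLoss μ Y a = ∫⁻ s in Ioi 0, μ {ω | a + s ≤ Y ω} := by
  rw [stopLoss, lintegral_eq_lintegral_meas_le μ (f := fun ω => max (Y ω - a) 0)
    (ae_of_all _ fun ω => le_max_right _ _) (by fun_prop)]
  refine setLIntegral_congr_fun measurableSet_Ioi fun s (hs : 0 < s) => ?_
  simp [hs.not_ge, le_sub_iff_add_le']

lemma stopLoss_le_of_measure_le_rpow (hY : Measurable Y) {a c m r : ℝ} (hc : 0 < c)
    (hm : 0 < m) (hr : 1 < r)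
    (htail : ∀ s > 0, μ {ω | a + s ≤ Y ω} ≤ ENNReal.ofReal ((c + m * s) ^ (-r))) :
    stopLoss μ Y a ≤ ENNReal.ofReal (c ^ (1 - r) / (m * (r - 1))) := by
  rw [stopLoss_eq_lintegral_measure_le μ hY, ← lintegral_Ioi_rpow_neg_affine hc hm hr]
  exact setLIntegral_mono' measurableSet_Ioi htail

lemma measure_le_of_ae_le_of_stopLoss_le [IsFiniteMeasure μ] (hX : Measurable X)
    (hY : Measurable Y) {t : ℝ} (ht : 0 < t) (hYt : ∀ᵐ ω ∂μ, Y ω ≤ t)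
    (hmaj : ∀ a : ℝ, 0 < a → stopLoss μ X a ≤ stopLoss μ Y a) :
    μ {ω | t ≤ X ω} ≤ μ {ω | t ≤ Y ω} := by
  refine ge_of_tendsto (tendsto_measure_setOf_le_nhdsLT μ hY t) ?_
  filter_upwards [Ioo_mem_nhdsLT ht] with a ⟨ha, hat⟩
  have hYa : stopLoss μ Y a ≤ ENNReal.ofReal (t - a) * μ {ω | a ≤ Y ω} := by
    rw [stopLoss, ← lintegral_indicator_const (measurableSet_le measurable_const hY)]
    refine lintegral_mono_ae (hYt.mono fun ω hω => ?_)
    by_cases h : a ≤ Y ω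
    · rw [indicator_of_mem (show ω ∈ {ω | a ≤ Y ω} from h)]
      exact ENNReal.ofReal_le_ofReal (max_le (by linarith) (by linarith))
    · simp [h, (not_le.1 h).le]
  have := (ofReal_sub_mul_measure_le_stopLoss μ hX a t).trans ((hmaj a ha).trans hYa)
  exact (ENNReal.mul_le_mul_iff_right (by simpa using hat) ENNReal.ofReal_ne_top).1 this

lemma measure_le_of_measure_le_tangent_rpow (hX : Measurable X) (hY : Measurable Y)
    {r t u m : ℝ} (hr : 1 < r) (hu : 0 < u) (hm : 0 < m)
    (htan : ∀ s > t - u / (m * r),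
      μ {ω | s ≤ Y ω} ≤ ENNReal.ofReal ((u + m * (s - t)) ^ (-r)))
    (hmaj : stopLoss μ X (t - u / (m * r)) ≤ stopLoss μ Y (t - u / (m * r))) :
    μ {ω | t ≤ X ω} ≤ ENNReal.ofReal ((1 - 1 / r) ^ (-r) * u ^ (-r)) := by
  set d := u / (m * r) with hd
  have hd0 : 0 < d := by positivity
  have h1r : 0 < 1 - 1 / r := sub_pos.2 ((div_lt_one (by linarith)).2 hr)
  have htail : ∀ s > 0,
      μ {ω | t - d + s ≤ Y ω} ≤ ENNReal.ofReal ((u * (1 - 1 / r) + m * s) ^ (-r)) := by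
    intro s hs
    have hline : u + m * (t - d + s - t) = u * (1 - 1 / r) + m * s := by
      rw [hd]
      field_simp
      ring
    simpa only [hline] using htan (t - d + s) (by linarith)
  have harea : (u * (1 - 1 / r)) ^ (1 - r) / (m * (r - 1))
      = d * ((1 - 1 / r) ^ (-r) * u ^ (-r)) := by
    rw [mul_rpow hu.le h1r.le, show 1 - r = -r + 1 by ring, rpow_add_one hu.ne',
      rpow_add_one h1r.ne', hd]
    have hr1 : r - 1 ≠ 0 := by linarith
    field_simp
  have key : ENNReal.ofReal d * μ {ω | t ≤ X ω}
      ≤ ENNReal.ofReal d * ENNReal.ofReal ((1 - 1 / r) ^ (-r) * u ^ (-r)) :=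
    calc ENNReal.ofReal d * μ {ω | t ≤ X ω}
        = ENNReal.ofReal (t - (t - d)) * μ {ω | t ≤ X ω} := by rw [sub_sub_cancel]
      _ ≤ stopLoss μ X (t - d) := ofReal_sub_mul_measure_le_stopLoss μ hX _ _
      _ ≤ stopLoss μ Y (t - d) := hmaj
      _ ≤ _ := stopLoss_le_of_measure_le_rpow μ hY (by positivity) hm hr htail
      _ = _ := by rw [harea, ENNReal.ofReal_mul hd0.le]
  exact (ENNReal.mul_le_mul_iff_right (by simpa using hd0) ENNReal.ofReal_ne_top).1 key

lemma measure_le_of_convexOn_tail_rpow [IsProbabilityMeasure μ] (hX : Measurable X)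
    (hY : Measurable Y) (hYpos : ∀ ω, 0 ≤ Y ω) {r : ℝ} (hr : 1 < r)
    (hconv : ConvexOn ℝ {t : ℝ | 0 ≤ t ∧ 0 < μ {ω | t ≤ Y ω}}
      (fun t => (μ {ω | t ≤ Y ω}).toReal ^ (-(1 / r))))
    (hmaj : ∀ a : ℝ, 0 < a → stopLoss μ X a ≤ stopLoss μ Y a)
    {t t' : ℝ} (ht : 0 < t) (htt' : t < t') (ht' : 0 < μ {ω | t' ≤ Y ω})
    (hsmall : (μ {ω | t ≤ Y ω}).toReal < (1 - 1 / r) ^ r) :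
    μ {ω | t ≤ X ω} ≤ ENNReal.ofReal ((1 - 1 / r) ^ (-r)) * μ {ω | t ≤ Y ω} := by
  set D := {t : ℝ | 0 ≤ t ∧ 0 < μ {ω | t ≤ Y ω}}
  set f := fun t => (μ {ω | t ≤ Y ω}).toReal ^ (-(1 / r)) with hf
  have hr0 : 0 < r := by linarith
  have hG0 : μ {ω | 0 ≤ Y ω} = 1 := by simp [hYpos]
  have h0D : (0 : ℝ) ∈ D := ⟨le_rfl, by simp [hG0]⟩
  have htD : t ∈ interior D := mem_interior_iff_mem_nhds.2 <| mem_of_superset (Ioo_mem_nhds ht htt')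
    (Ioo_subset_Icc_self.trans (hconv.1.ordConnected.out h0D ⟨by linarith, ht'⟩))
  set m := derivWithin f (Ioi t) t
  have htangent : ∀ s ∈ D, f t + m * (s - t) ≤ f s := fun s hs =>
    hconv.add_rightDeriv_mul_sub_le htD hs
  have hx : 0 < (μ {ω | t ≤ Y ω}).toReal :=
    ENNReal.toReal_pos (ht'.trans_le (measure_mono fun ω (h : t' ≤ Y ω) => htt'.le.trans h)).ne'
      (measure_ne_top _ _)
  have hu := one_lt_rpow_neg_inv_mul hr hx hsmall
  have hu' : r < f t * (r - 1) := by
    have := mul_lt_mul_of_pos_left hu hr0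
    field_simp at this
    linarith
  have hmt : f t - 1 ≤ m * t := by
    have := htangent 0 h0D
    simp only [hf, hG0, ENNReal.toReal_one, one_rpow] at this
    linarith
  have hm : 0 < m := pos_of_mul_pos_left (by nlinarith) ht.le
  have ha : 0 < t - f t / (m * r) := by
    rw [sub_pos, div_lt_iff₀ (by positivity)]
    nlinarith
  refine (measure_le_of_measure_le_tangent_rpow μ hX hY hr (by positivity) hm ?_
    (hmaj _ ha)).trans_eq ?_
  · intro s hs
    rcases eq_zero_or_pos (μ {ω | s ≤ Y ω}) with hGs | hGs
    · simp [hGs]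
    have hslope : m * (t - f t / (m * r)) < m * s := mul_lt_mul_of_pos_left hs hm
    rw [mul_sub, show m * (f t / (m * r)) = f t / r by field_simp] at hslope
    rw [← ENNReal.ofReal_toReal (measure_ne_top μ _)]
    refine ENNReal.ofReal_le_ofReal (le_rpow_neg_of_le_rpow_neg_inv ENNReal.toReal_nonneg ?_ hr0
      (htangent s ⟨by linarith, hGs⟩))
    linarith [show f t * (1 - 1 / r) = f t - f t / r by ring]
  · rw [← rpow_mul hx.le, show -(1 / r) * -r = 1 by field_simp, rpow_one,
      ENNReal.ofReal_mul (rpow_nonneg (sub_pos.2 ((div_lt_one hr0).2 hr)).le _),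
      ENNReal.ofReal_toReal (measure_ne_top _ _)]

end

/-- Kemperman's tail comparison theorem: if `Y ≥ 0`, `r ∈ (1,∞)`,
`t ↦ (P{Y ≥ t})^{-1/r}` is convex on the part of `[0,∞)` where `P{Y ≥ t} > 0`,
and `E max{X-a, 0} ≤ E max{Y-a, 0}` for all `a > 0`, then
`P{X ≥ t} ≤ (1 - 1/r)^{-r} P{Y ≥ t}` for all `t ≥ 0`. -/
theorem stmt13 {Ω : Type*} [MeasurableSpace Ω] (P : Measure Ω) [IsProbabilityMeasure P]
    (X Y : Ω → ℝ) (hX : Measurable X) (hY : Measurable Y)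
    (hYpos : ∀ ω, 0 ≤ Y ω)
    (r : ℝ) (hr : 1 < r)
    (hconv : ConvexOn ℝ {t : ℝ | 0 ≤ t ∧ 0 < P {ω | t ≤ Y ω}}
      (fun t => (P {ω | t ≤ Y ω}).toReal ^ (-(1 / r))))
    (hmaj : ∀ a : ℝ, 0 < a →
      (∫⁻ ω, ENNReal.ofReal (max (X ω - a) 0) ∂P)
        ≤ ∫⁻ ω, ENNReal.ofReal (max (Y ω - a) 0) ∂P) :
    ∀ t : ℝ, 0 ≤ t →
      P {ω | t ≤ X ω} ≤ ENNReal.ofReal ((1 - 1 / r) ^ (-r)) * P {ω | t ≤ Y ω} := by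
  intro t ht
  have h1r : 0 < 1 - 1 / r := sub_pos.2 ((div_lt_one (by linarith)).2 hr)
  have h1r' : 1 - 1 / r ≤ 1 := by linarith [one_div_pos.2 (show 0 < r by linarith)]
  rcases le_or_gt (ENNReal.ofReal ((1 - 1 / r) ^ r)) (P {ω | t ≤ Y ω}) with hlarge | hsmall
  · calc P {ω | t ≤ X ω} ≤ 1 := prob_le_one
      _ = ENNReal.ofReal ((1 - 1 / r) ^ (-r)) * ENNReal.ofReal ((1 - 1 / r) ^ r) := by
        rw [← ENNReal.ofReal_mul (rpow_nonneg h1r.le _), ← rpow_add h1r]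
        simp
      _ ≤ _ := by gcongr
  rw [ENNReal.lt_ofReal_iff_toReal_lt (measure_ne_top _ _)] at hsmall
  have htpos : 0 < t := by
    refine ht.lt_of_ne' fun h => hsmall.not_ge ?_
    simpa [h, hYpos] using rpow_le_one h1r.le h1r' (by linarith)
  by_cases hdeg : ∀ s, t < s → P {ω | s ≤ Y ω} = 0
  · calc P {ω | t ≤ X ω} ≤ P {ω | t ≤ Y ω} :=
          measure_le_of_ae_le_of_stopLoss_le P hX hY htpos
            ((ae_le_const_iff_forall_gt_measure_zero Y t).2 hdeg) hmaj
      _ ≤ _ := le_mul_of_one_le_left' (by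
          simpa using ENNReal.ofReal_le_ofReal (one_le_rpow_of_pos_of_le_one_of_nonpos h1r h1r'
            (by linarith)))
  push Not at hdeg
  obtain ⟨t', htt', ht'⟩ := hdeg
  exact measure_le_of_convexOn_tail_rpow P hX hY hYpos hr hconv hmaj htpos htt'
    (pos_iff_ne_zero.2 ht') hsmall
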